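/- arXiv:2107.09553 — 3 statements merged into one kernel-verified Lean document; each statement's English description precedes it below -/
import Mathlib

section
/- Let n ≥ 2 and let d_0, d_1, ..., d_n be positive integers with d_n ≥ d_{n-1} ≥ ... ≥ d_0 ≥ 2, satisfying the log-concavity condition d_i^2 ≥ d_{i+1} · d_{i-1} for all 0 < i < n. If d_n - d_{n-1} ≥ 2, then d_i - d_{i-1} ≥ 2 for every 1 ≤ i ≤ n; in particular d_{n-1} ≥ d_0 + 2(n-1). -/
/-- Log-concave sequence lemma: if `d_n ≥ ... ≥ d_0 ≥ 2` is a log-concave sequence of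
positive integers with `d_n - d_{n-1} ≥ 2`, then all consecutive gaps are at least `2`;
in particular `d_{n-1} ≥ d_0 + 2(n-1)`. -/
theorem log_concave_gaps (n : ℕ) (hn : 2 ≤ n) (d : ℕ → ℤ)
    (hpos : ∀ i ≤ n, 0 < d i)
    (hmono : ∀ i < n, d i ≤ d (i + 1))
    (h0 : 2 ≤ d 0)
    (hlog : ∀ i, 0 < i → i < n → d (i + 1) * d (i - 1) ≤ d i ^ 2)
    (hgap : 2 ≤ d n - d (n - 1)) :
    (∀ i, 1 ≤ i → i ≤ n → 2 ≤ d i - d (i - 1)) ∧ d 0 + 2 * (n - 1 : ℤ) ≤ d (n - 1) := by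
  have d0le : ∀ i, i ≤ n → d 0 ≤ d i := by
    intro i hi
    induction i with
    | zero => exact le_rfl
    | succ k ih =>
      exact le_trans (ih (by omega)) (hmono k (by omega))
  have key : ∀ i, 1 ≤ i → i < n → 2 ≤ d (i + 1) - d i → 2 ≤ d i - d (i - 1) := by
    intro i h1 hin hg
    by_contra h
    push_neg at h
    have hl := hlog i h1 hin
    have hd0 := d0le (i - 1) (by omega)
    have hmi := hmono (i - 1) (by omega)
    rw [show i - 1 + 1 = i by omega] at hmi
    nlinarith [hpos i (le_of_lt hin), hpos (i - 1) (by omega : i - 1 ≤ n)]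
  have gaps : ∀ m i, i + m = n → 1 ≤ i → 2 ≤ d i - d (i - 1) := by
    intro m
    induction m with
    | zero =>
      intro i hi h1
      have : i = n := by omega
      subst this
      exact hgap
    | succ k ih =>
      intro i hi h1
      have hg := ih (i + 1) (by omega) (by omega)
      rw [show i + 1 - 1 = i by omega] at hg
      exact key i h1 (by omega) hg
  constructor
  · intro i h1 hin
    exact gaps (n - i) i (by omega) h1
  · have sum : ∀ i, i ≤ n → d 0 + 2 * (i : ℤ) ≤ d i := by
      intro i hi
      induction i with
      | zero => simp
      | succ k ih =>
        have hg := gaps (n - (k + 1)) (k + 1) (by omega) (by omega)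
        rw [show k + 1 - 1 = k by omega] at hg
        have := ih (by omega)
        push_cast
        linarith
    have := sum (n - 1) (by omega)
    have hc : ((n - 1 : ℕ) : ℤ) = (n : ℤ) - 1 := by omega
    rw [hc] at this
    linarith
end

section
/- Let N ≥ 2 and d ≥ 1 be integers, let p be a natural number, and define A = ⌊(d-1)/(N-1)⌋ and ε = d - 1 - A(N-1), so 0 ≤ ε < N-1. If p·d + 2 ≤ A(A-1)(N-1) + 2Aε, then d ≥ (p+1)(N-1) + 2. -/
/-- Arithmetic core of the Castelnuovo-type inequality: with `A = ⌊(d-1)/(N-1)⌋` and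
`ε = d - 1 - A(N-1)`, if `p·d + 2 ≤ A(A-1)(N-1) + 2Aε` then `d ≥ (p+1)(N-1) + 2`. -/
theorem castelnuovo_arith (N d p : ℕ) (hN : 2 ≤ N) (hd : 1 ≤ d)
    (A ε : ℕ) (hA : A = (d - 1) / (N - 1)) (hε : ε = d - 1 - A * (N - 1))
    (h : p * d + 2 ≤ A * (A - 1) * (N - 1) + 2 * A * ε) :
    (p + 1) * (N - 1) + 2 ≤ d := by
  obtain ⟨m, rfl⟩ : ∃ m, N = m + 2 := ⟨N - 2, by omega⟩
  obtain ⟨c, rfl⟩ : ∃ c, d = c + 1 := ⟨d - 1, by omega⟩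
  simp only [show m + 2 - 1 = m + 1 from rfl, Nat.add_sub_cancel] at hA hε h ⊢
  have hdiv : (m + 1) * A + c % (m + 1) = c := by rw [hA]; exact Nat.div_add_mod c (m+1)
  have hmod := Nat.mod_lt c (show 0 < m+1 by omega)
  have hcomm : (m + 1) * A = A * (m + 1) := mul_comm _ _
  have hc : c = A * (m+1) + ε := by omega
  have hεlt : ε < m + 1 := by omega
  rcases Nat.eq_zero_or_pos A with h0 | h1
  · subst h0; simp at h
  obtain ⟨B, rfl⟩ : ∃ B, A = B + 1 := ⟨A - 1, by omega⟩
  simp only [Nat.add_sub_cancel] at h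
  by_contra hcon
  push_neg at hcon
  have hc2 : (B + 1) * (m + 1) ≤ (p + 1) * (m + 1) := by
    have : c ≤ (p + 1) * (m + 1) := by linarith
    linarith [hc]
  have hBp : B ≤ p := by
    have := Nat.le_of_mul_le_mul_right hc2 (show 0 < m + 1 by omega)
    omega
  rcases Nat.lt_or_ge B p with hB | hB
  · have key : (B + 1) * B * (m + 1) + 2 * (B + 1) * ε ≤ (B + 1) * (B * (m + 1) + 2 * ε) :=
      le_of_eq (by ring)
    have k2 : B * (m + 1) + 2 * ε + 1 ≤ c := by nlinarith [hc, hεlt]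
    have k3 : (B + 1) * (B * (m + 1) + 2 * ε) ≤ p * (B * (m + 1) + 2 * ε) :=
      Nat.mul_le_mul_right _ (by omega)
    have k4 : p * (B * (m + 1) + 2 * ε) + p ≤ p * c := by nlinarith [k2]
    nlinarith [h, key, k3, k4]
  · have hBe : B = p := by omega
    subst hBe
    have he0 : ε = 0 := by
      have : ε < 1 := by linarith [hc, hcon]
      omega
    subst he0
    nlinarith [h, hc]
end

section
/- Let ℓ ≥ 1 and let μ_1 > μ_2 > ... > μ_ℓ ≥ 0 be rational numbers, 0 = r_0 < r_1 < ... < r_ℓ integers, and 1 ≤ p ≤ ℓ, n ≥ 1 integers. Set μ_{ℓ+1} = 0 and D = ∑_{i=1}^{ℓ} r_i(μ_i - μ_{i+1}). Then ∑_{i=1}^{p-2}(2r_i - 1)(μ_i - μ_{i+1}) + (2r_{p-1} - n + ℓ - p)(μ_{p-1} - μ_p) + 2∑_{i=p}^{ℓ-1}(r_i - n + ℓ - i)(μ_i - μ_{i+1}) + 2(r_ℓ - n)μ_ℓ ≥ 2D - n(μ_1 + μ_p). (Empty sums are zero; for p = 1 the terms indexed below p are absent.) -/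
private lemma tele_aux (f : ℕ → ℚ) (a : ℕ) : ∀ b : ℕ, a ≤ b →
    ∑ i ∈ Finset.Ioc a b, (f i - f (i + 1)) = f (a + 1) - f (b + 1) := by
  intro b hab
  induction b, hab using Nat.le_induction with
  | base => simp
  | succ b hab ih => rw [Finset.sum_Ioc_succ_top (by omega), ih]; ring

/-- Numerical estimate at the heart of the Xiao-type slope inequality: with
strictly decreasing nonnegative HN slopes `μ_1 > ... > μ_ℓ ≥ 0 = μ_{ℓ+1}`,
strictly increasing ranks `0 = r_0 < r_1 < ... < r_ℓ`, `1 ≤ p ≤ ℓ` and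
`D = ∑_{i=1}^{ℓ} r_i(μ_i - μ_{i+1})`, one has
`∑_{i=1}^{p-2}(2r_i-1)(μ_i-μ_{i+1}) + (2r_{p-1}-n+ℓ-p)(μ_{p-1}-μ_p)
 + 2∑_{i=p}^{ℓ-1}(r_i-n+ℓ-i)(μ_i-μ_{i+1}) + 2(r_ℓ-n)μ_ℓ ≥ 2D - n(μ_1+μ_p)`
(the term indexed `p-1` being absent when `p = 1`). -/
theorem xiao_numerical_estimate (ℓ n p : ℕ) (hℓ : 1 ≤ ℓ) (hn : 1 ≤ n)
    (hp1 : 1 ≤ p) (hpℓ : p ≤ ℓ) (μ : ℕ → ℚ) (r : ℕ → ℤ)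
    (hμdec : ∀ i, 1 ≤ i → i < ℓ → μ (i + 1) < μ i)
    (hμℓ : 0 ≤ μ ℓ) (hμtop : μ (ℓ + 1) = 0)
    (hr0 : r 0 = 0) (hrinc : ∀ i < ℓ, r i < r (i + 1))
    (D : ℚ) (hD : D = ∑ i ∈ Finset.Icc 1 ℓ, (r i : ℚ) * (μ i - μ (i + 1))) :
    (∑ i ∈ Finset.Icc 1 (p - 2), (2 * (r i : ℚ) - 1) * (μ i - μ (i + 1)))
      + (if 2 ≤ p then
          (2 * (r (p - 1) : ℚ) - n + ℓ - p) * (μ (p - 1) - μ p) else 0)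
      + 2 * ∑ i ∈ Finset.Icc p (ℓ - 1),
          ((r i : ℚ) - n + ℓ - i) * (μ i - μ (i + 1))
      + 2 * ((r ℓ : ℚ) - n) * μ ℓ
      ≥ 2 * D - n * (μ 1 + μ p) := by
  subst hD
  have hδ : ∀ i, 1 ≤ i → i ≤ ℓ → 0 ≤ μ i - μ (i + 1) := by
    intro i h1 h2
    rcases eq_or_lt_of_le h2 with rfl | h
    · rw [hμtop]; linarith
    · have := hμdec i h1 h; linarith
  have hn' : (1 : ℚ) ≤ n := by exact_mod_cast hn
  obtain ⟨m, rfl⟩ : ∃ m, ℓ = m + 1 := ⟨ℓ - 1, by omega⟩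
  rcases Nat.lt_or_ge p 2 with hp2 | hp2
  · -- p = 1
    have hp : p = 1 := by omega
    subst hp
    rw [if_neg (by omega)]
    simp only [show (1:ℕ) - 2 = 0 from rfl, show m + 1 - 1 = m from rfl,
      Finset.Icc_eq_empty (by omega : ¬ (1:ℕ) ≤ 0), Finset.sum_empty]
    rw [show Finset.Icc 1 m = Finset.Ioc 0 m from Finset.Icc_add_one_left_eq_Ioc 0 m,
        show Finset.Icc 1 (m+1) = Finset.Ioc 0 (m+1) from Finset.Icc_add_one_left_eq_Ioc 0 (m+1),
        Finset.sum_Ioc_succ_top (by omega : 0 ≤ m)]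
    have htele := tele_aux (fun i => μ i) 0 m (by omega)
    have hA : ∑ i ∈ Finset.Ioc 0 m, ((r i : ℚ) * (μ i - μ (i+1)) - n * (μ i - μ (i+1)))
        ≤ ∑ i ∈ Finset.Ioc 0 m, ((r i : ℚ) - n + ↑(m+1) - i) * (μ i - μ (i + 1)) := by
      apply Finset.sum_le_sum
      intro i hi
      simp only [Finset.mem_Ioc] at hi
      have hd := hδ i (by omega) (by omega)
      have hi' : (i : ℚ) ≤ m := by exact_mod_cast hi.2
      push_cast
      nlinarith
    rw [Finset.sum_sub_distrib, ← Finset.mul_sum, htele] at hA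
    rw [hμtop]
    push_cast at hA ⊢
    norm_num at hA
    linarith
  · obtain ⟨k, rfl⟩ : ∃ k, p = k + 2 := ⟨p - 2, by omega⟩
    have hkm : k + 1 ≤ m := by omega
    rw [if_pos (by omega)]
    simp only [show k + 2 - 2 = k from rfl, show k + 2 - 1 = k + 1 from rfl,
      show m + 1 - 1 = m from rfl]
    rw [show Finset.Icc 1 k = Finset.Ioc 0 k from Finset.Icc_add_one_left_eq_Ioc 0 k,
        show Finset.Icc (k+2) m = Finset.Ioc (k+1) m from Finset.Icc_add_one_left_eq_Ioc (k+1) m,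
        show Finset.Icc 1 (m+1) = Finset.Ioc 0 (m+1) from Finset.Icc_add_one_left_eq_Ioc 0 (m+1),
        Finset.sum_Ioc_succ_top (by omega : 0 ≤ m),
        ← Finset.sum_Ioc_consecutive _ (by omega : 0 ≤ k+1) (by omega : k+1 ≤ m),
        Finset.sum_Ioc_succ_top (by omega : 0 ≤ k)]
    have tele1 := tele_aux (fun i => μ i) 0 k (by omega)
    have tele2 := tele_aux (fun i => μ i) (k+1) m (by omega)
    have hA : ∑ i ∈ Finset.Ioc 0 k,
          ((r i : ℚ) * (μ i - μ (i+1)) * 2 - n * (μ i - μ (i+1)))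
        ≤ ∑ i ∈ Finset.Ioc 0 k, (2 * (r i : ℚ) - 1) * (μ i - μ (i + 1)) := by
      apply Finset.sum_le_sum
      intro i hi
      simp only [Finset.mem_Ioc] at hi
      have hd := hδ i (by omega) (by omega)
      nlinarith
    have hC : ∑ i ∈ Finset.Ioc (k+1) m,
          ((r i : ℚ) * (μ i - μ (i+1)) - n * (μ i - μ (i+1)))
        ≤ ∑ i ∈ Finset.Ioc (k+1) m, ((r i : ℚ) - n + ↑(m+1) - i) * (μ i - μ (i + 1)) := by
      apply Finset.sum_le_sum
      intro i hi
      simp only [Finset.mem_Ioc] at hi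
      have hd := hδ i (by omega) (by omega)
      have hi' : (i : ℚ) ≤ m := by exact_mod_cast hi.2
      push_cast
      nlinarith
    have hd1 := hδ (k+1) (by omega) (by omega)
    have hB : (2 * (r (k+1) : ℚ) - n + ↑(m+1) - ↑(k+2)) * (μ (k+1) - μ (k+2))
        ≥ (r (k+1) : ℚ) * (μ (k+1) - μ (k+1+1)) * 2 - n * (μ (k+1) - μ (k+1+1)) := by
      have hmk : ((k:ℚ)+2) ≤ (m:ℚ)+1 := by
        have h2 : (k+2:ℕ) ≤ m+1 := by omega
        exact_mod_cast h2
      push_cast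
      nlinarith
    rw [Finset.sum_sub_distrib, ← Finset.sum_mul, ← Finset.mul_sum, tele1] at hA
    rw [Finset.sum_sub_distrib, ← Finset.mul_sum, tele2] at hC
    rw [hμtop]
    push_cast at hA hB hC ⊢
    norm_num at hA hB hC
    linarith
end
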